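/- For every c > 0, a > 0, t > 0 and L > 0, as the stability index α tends to 0 from above the number variance recovers Poisson behaviour: lim_{α→0⁺} V_t^{α,c,a}[L] = (L/a)(1 − e^{-2ct}). -/

import Mathlib

/-!
As `α → 0⁺` the weight `exp (-(2 c t (θ / a) ^ α))` tends to `exp (-(2 c t))` for every `θ > 0`
and stays in `(0, 1]`, so by dominated convergence (dominating function
`(1 - cos (L θ / a)) / θ ^ 2`) the integral tends to `exp (-(2 c t))` times
`∫₀^∞ (cos (b θ) - 1) / θ ^ 2 dθ = -π b / 2`, `b = L / a`. That integral is computed by writing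
`θ⁻² = ∫₀^∞ s e^{-sθ} ds` and exchanging the order of integration (Tonelli): the inner integral
`s ∫₀^∞ e^{-sθ} (1 - cos bθ) dθ = b² / (s² + b²)` integrates to `π b / 2`.
-/
open MeasureTheory Filter Set

/-- The averaged number variance of the infinite system of independent symmetric
`α`-stable processes started from the equispaced-averaged configuration. -/
noncomputable def numVar (α c a t L : ℝ) : ℝ :=
  L / a + (2 / Real.pi) * ∫ θ in Set.Ioi (0:ℝ),
    Real.exp (-(2 * c * t * (θ / a) ^ α)) * (Real.cos (L * θ / a) - 1) / θ ^ 2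

open Real Topology

lemma integrableOn_mul_exp_neg_mul_Ioi {r : ℝ} (hr : 0 < r) :
    IntegrableOn (fun s : ℝ => s * exp (-(r * s))) (Ioi 0) := by
  simpa using integrableOn_rpow_mul_exp_neg_mul_rpow (s := 1) (p := 1) (by norm_num) one_pos hr

lemma integral_mul_exp_neg_mul_Ioi {r : ℝ} (hr : 0 < r) :
    ∫ s in Ioi (0:ℝ), s * exp (-(r * s)) = (r ^ 2)⁻¹ := by
  have h := integral_rpow_mul_exp_neg_mul_Ioi two_pos hr
  norm_num [Gamma_two] at h
  exact h

lemma integrableOn_exp_neg_mul_Ioi {s : ℝ} (hs : 0 < s) :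
    IntegrableOn (fun θ : ℝ => exp (-(s * θ))) (Ioi 0) := by
  simpa using exp_neg_integrableOn_Ioi 0 hs

lemma integral_exp_neg_mul_Ioi {s : ℝ} (hs : 0 < s) :
    ∫ θ in Ioi (0:ℝ), exp (-(s * θ)) = s⁻¹ := by
  simpa [neg_div] using integral_exp_mul_Ioi (neg_neg_of_pos hs) 0

lemma exp_neg_mul_mul_cos_eq_re (s b θ : ℝ) :
    exp (-(s * θ)) * cos (b * θ) = (Complex.exp ((-s + b * Complex.I) * θ)).re := by
  simp [Complex.exp_re]

lemma integrableOn_exp_neg_mul_mul_cos_Ioi {s : ℝ} (hs : 0 < s) (b : ℝ) :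
    IntegrableOn (fun θ : ℝ => exp (-(s * θ)) * cos (b * θ)) (Ioi 0) := by
  simp_rw [exp_neg_mul_mul_cos_eq_re]
  exact (integrableOn_exp_mul_complex_Ioi (by simpa using hs) 0).re

lemma integral_exp_neg_mul_mul_cos_Ioi {s : ℝ} (hs : 0 < s) (b : ℝ) :
    ∫ θ in Ioi (0:ℝ), exp (-(s * θ)) * cos (b * θ) = s / (s ^ 2 + b ^ 2) := by
  have hint := integrableOn_exp_mul_complex_Ioi (a := -s + b * Complex.I) (by simpa using hs) 0
  simp_rw [exp_neg_mul_mul_cos_eq_re, ← RCLike.re_to_complex]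
  rw [integral_re hint, RCLike.re_to_complex, integral_exp_mul_complex_Ioi (by simpa using hs)]
  simp [Complex.div_re, Complex.normSq_apply]
  field_simp

lemma integrableOn_exp_neg_mul_mul_one_sub_cos_Ioi {s : ℝ} (hs : 0 < s) (b : ℝ) :
    IntegrableOn (fun θ : ℝ => exp (-(s * θ)) * (1 - cos (b * θ))) (Ioi 0) := by
  simp_rw [mul_one_sub]
  exact (integrableOn_exp_neg_mul_Ioi hs).sub (integrableOn_exp_neg_mul_mul_cos_Ioi hs b)

lemma integral_exp_neg_mul_mul_one_sub_cos_Ioi {s : ℝ} (hs : 0 < s) (b : ℝ) :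
    ∫ θ in Ioi (0:ℝ), exp (-(s * θ)) * (1 - cos (b * θ)) = s⁻¹ - s / (s ^ 2 + b ^ 2) := by
  simp_rw [mul_one_sub]
  rw [integral_sub (integrableOn_exp_neg_mul_Ioi hs) (integrableOn_exp_neg_mul_mul_cos_Ioi hs b),
    integral_exp_neg_mul_Ioi hs, integral_exp_neg_mul_mul_cos_Ioi hs]

lemma integrableOn_inv_one_add_div_sq_Ioi {b : ℝ} (hb : b ≠ 0) :
    IntegrableOn (fun s : ℝ => (1 + (s / b) ^ 2)⁻¹) (Ioi 0) :=
  (integrable_inv_one_add_sq.comp_div hb).integrableOn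

lemma integral_inv_one_add_div_sq_Ioi {b : ℝ} (hb : 0 < b) :
    ∫ s in Ioi (0:ℝ), (1 + (s / b) ^ 2)⁻¹ = π * b / 2 := by
  have h := integral_comp_mul_left_Ioi (fun x : ℝ => (1 + x ^ 2)⁻¹) 0 (inv_pos.2 hb)
  simp only [mul_zero, integral_Ioi_inv_one_add_sq, arctan_zero, sub_zero, inv_inv,
    smul_eq_mul] at h
  simp_rw [div_eq_inv_mul, h]
  ring

lemma one_sub_cos_nonneg (x : ℝ) : 0 ≤ 1 - cos x := sub_nonneg.2 (cos_le_one x)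

lemma lintegral_one_sub_cos_mul_div_sq {b : ℝ} (hb : 0 < b) :
    ∫⁻ θ in Ioi 0, ENNReal.ofReal ((1 - cos (b * θ)) / θ ^ 2) = ENNReal.ofReal (π * b / 2) := by
  set k : ℝ → ℝ → ℝ := fun θ s => s * exp (-(θ * s)) * (1 - cos (b * θ))
  have hk_meas : AEMeasurable (Function.uncurry fun θ s => ENNReal.ofReal (k θ s))
      ((volume.restrict (Ioi 0)).prod (volume.restrict (Ioi 0))) := by
    fun_prop
  have inner_s : ∀ θ ∈ Ioi (0:ℝ),
      ENNReal.ofReal ((1 - cos (b * θ)) / θ ^ 2) = ∫⁻ s in Ioi 0, ENNReal.ofReal (k θ s) := by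
    intro θ (hθ : 0 < θ)
    rw [← ofReal_integral_eq_lintegral_ofReal ((integrableOn_mul_exp_neg_mul_Ioi hθ).mul_const _)]
    · rw [integral_mul_const, integral_mul_exp_neg_mul_Ioi hθ, inv_mul_eq_div]
    · filter_upwards [ae_restrict_mem measurableSet_Ioi] with s (hs : 0 < s)
      have := one_sub_cos_nonneg (b * θ)
      positivity
  have inner_θ : ∀ s ∈ Ioi (0:ℝ),
      ∫⁻ θ in Ioi 0, ENNReal.ofReal (k θ s) = ENNReal.ofReal ((1 + (s / b) ^ 2)⁻¹) := by
    intro s (hs : 0 < s)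
    have hk_eq : ∀ θ, k θ s = s * (exp (-(s * θ)) * (1 - cos (b * θ))) := fun θ => by
      show s * exp (-(θ * s)) * _ = _
      rw [mul_comm θ s, mul_assoc]
    simp_rw [hk_eq]
    rw [← ofReal_integral_eq_lintegral_ofReal
      ((integrableOn_exp_neg_mul_mul_one_sub_cos_Ioi hs b).const_mul s)]
    · rw [integral_const_mul, integral_exp_neg_mul_mul_one_sub_cos_Ioi hs]
      congr 1
      field_simp
      ring
    · refine ae_of_all _ fun θ => ?_
      have := one_sub_cos_nonneg (b * θ)
      positivity
  calc ∫⁻ θ in Ioi 0, ENNReal.ofReal ((1 - cos (b * θ)) / θ ^ 2)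
      = ∫⁻ θ in Ioi 0, ∫⁻ s in Ioi 0, ENNReal.ofReal (k θ s) :=
        setLIntegral_congr_fun measurableSet_Ioi inner_s
    _ = ∫⁻ s in Ioi 0, ∫⁻ θ in Ioi 0, ENNReal.ofReal (k θ s) := lintegral_lintegral_swap hk_meas
    _ = ∫⁻ s in Ioi 0, ENNReal.ofReal ((1 + (s / b) ^ 2)⁻¹) :=
        setLIntegral_congr_fun measurableSet_Ioi inner_θ
    _ = ENNReal.ofReal (π * b / 2) := by
      rw [← ofReal_integral_eq_lintegral_ofReal (integrableOn_inv_one_add_div_sq_Ioi hb.ne')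
        (ae_of_all _ fun s => by positivity), integral_inv_one_add_div_sq_Ioi hb]

lemma integrableOn_one_sub_cos_mul_div_sq {b : ℝ} (hb : 0 < b) :
    IntegrableOn (fun θ : ℝ => (1 - cos (b * θ)) / θ ^ 2) (Ioi 0) := by
  have hmeas : Measurable fun θ : ℝ => (1 - cos (b * θ)) / θ ^ 2 := by fun_prop
  refine ⟨hmeas.aestronglyMeasurable, ?_⟩
  rw [hasFiniteIntegral_iff_ofReal
      (ae_of_all _ fun θ => div_nonneg (one_sub_cos_nonneg _) (sq_nonneg θ)),
    lintegral_one_sub_cos_mul_div_sq hb]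
  exact ENNReal.ofReal_lt_top

lemma integral_one_sub_cos_mul_div_sq {b : ℝ} (hb : 0 < b) :
    ∫ θ in Ioi (0:ℝ), (1 - cos (b * θ)) / θ ^ 2 = π * b / 2 := by
  rw [integral_eq_lintegral_of_nonneg_ae
    (ae_of_all _ fun θ => div_nonneg (one_sub_cos_nonneg _) (sq_nonneg θ))
    (integrableOn_one_sub_cos_mul_div_sq hb).aestronglyMeasurable,
    lintegral_one_sub_cos_mul_div_sq hb, ENNReal.toReal_ofReal (by positivity)]

lemma tendsto_integral_exp_neg_mul_rpow_mul {g : ℝ → ℝ} (hg : IntegrableOn g (Ioi 0))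
    {κ a : ℝ} (hκ : 0 ≤ κ) (ha : 0 < a) :
    Tendsto (fun α : ℝ => ∫ θ in Ioi (0:ℝ), exp (-(κ * (θ / a) ^ α)) * g θ) (𝓝 0)
      (𝓝 (exp (-κ) * ∫ θ in Ioi (0:ℝ), g θ)) := by
  rw [← integral_const_mul]
  refine tendsto_integral_filter_of_dominated_convergence (fun θ => ‖g θ‖)
    (Eventually.of_forall fun α => ?_) (Eventually.of_forall fun α => ?_) hg.norm ?_
  · have hweight : Measurable fun θ : ℝ => exp (-(κ * (θ / a) ^ α)) := by fun_prop
    exact hweight.aestronglyMeasurable.mul hg.aestronglyMeasurable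
  · filter_upwards [ae_restrict_mem measurableSet_Ioi] with θ (hθ : 0 < θ)
    have hweight_le : exp (-(κ * (θ / a) ^ α)) ≤ 1 :=
      exp_le_one_iff.2 (neg_nonpos.2 (mul_nonneg hκ (rpow_nonneg (by positivity) α)))
    rw [norm_mul, norm_of_nonneg (exp_pos _).le]
    exact mul_le_of_le_one_left (norm_nonneg _) hweight_le
  · filter_upwards [ae_restrict_mem measurableSet_Ioi] with θ (hθ : 0 < θ)
    have hpow : ContinuousAt (fun α : ℝ => (θ / a) ^ α) 0 :=
      continuousAt_const.rpow continuousAt_id (Or.inl (by positivity))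
    simpa using ((hpow.const_mul κ).neg.rexp.mul_const (g θ)).tendsto

lemma numVar_eq (α c a t L : ℝ) :
    numVar α c a t L = L / a - 2 / π *
      ∫ θ in Ioi (0:ℝ), exp (-(2 * c * t * (θ / a) ^ α)) * ((1 - cos (L / a * θ)) / θ ^ 2) := by
  rw [numVar, sub_eq_add_neg, ← mul_neg, ← integral_neg]
  congr 3 with θ
  rw [mul_div_right_comm L θ a]
  ring

theorem numVar_alpha_to_zero_poisson (c a t L : ℝ)
    (hc : 0 < c) (ha : 0 < a) (ht : 0 < t) (hL : 0 < L) :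
    Tendsto (fun α : ℝ => numVar α c a t L) (nhdsWithin 0 (Set.Ioi 0))
      (nhds ((L / a) * (1 - Real.exp (-(2 * c * t))))) := by
  have hb : 0 < L / a := div_pos hL ha
  have hlim := tendsto_integral_exp_neg_mul_rpow_mul (integrableOn_one_sub_cos_mul_div_sq hb)
    (by positivity : 0 ≤ 2 * c * t) ha
  rw [integral_one_sub_cos_mul_div_sq hb] at hlim
  have hvalue : L / a * (1 - exp (-(2 * c * t))) =
      L / a - 2 / π * (exp (-(2 * c * t)) * (π * (L / a) / 2)) := by
    field_simp
  simp_rw [numVar_eq, hvalue]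
  exact (tendsto_const_nhds.sub (hlim.const_mul _)).mono_left nhdsWithin_le_nhds
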